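/- arXiv:1303.4289 — 3 statements merged into one kernel-verified Lean document; each statement's English description precedes it below -/
import Mathlib

section
/- Fix a channel coefficient h ∈ ℂ with h ≠ 0. Then the MVU filter f_MVU = x/‖x‖² is not a minimizer of the zeroth-order symbol-estimate MSE for the ZF equalizer: there exists a nonzero filter f ∈ ℂ^B with M_dc(f) < M_dc(f_MVU). (Proposition 1: the MVU estimator is not optimal for minimizing [MSE_x^dc(ZF)]_0 when the channel is deterministic but unknown.) -/
/-!
If `φ(f) = 1`, then along the ray `c f` (`c` real), with `a = |h|²` and `n = ‖f‖²`,
`M_dc(c f) = (σx² a (c - 1)² + σx² σw² n c² + σw²) / (c² (a + σw² n))`.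
At `c = 1` the bias term `σx² a (c - 1)²` is stationary, while the factor `1 / c²` lowers the
additive noise term `σw²` to first order. Hence some `c > 1`, for instance
`c = 1 + σw² / (a σx²)`, beats `f_MVU`, for which `φ = 1`.
-/

open MeasureTheory

/-- `φ(f) = fᴴ x = Σᵢ conj(fᵢ)·xᵢ`. -/
noncomputable def phi {B : ℕ} (x f : Fin B → ℂ) : ℂ :=
  ∑ i, (starRingEnd ℂ) (f i) * x i

/-- Squared Euclidean norm `‖f‖² = Σᵢ |fᵢ|²`. -/
noncomputable def nsq {B : ℕ} (f : Fin B → ℂ) : ℝ :=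
  ∑ i, Complex.normSq (f i)

/-- Zeroth-order symbol-estimate MSE of the ZF equalizer, deterministic channel `h`. -/
noncomputable def Mdc {B : ℕ} (σx2 σw2 : ℝ) (h : ℂ) (x f : Fin B → ℂ) : ℝ :=
  (σx2 * (Complex.normSq h * Complex.normSq (phi x f - 1) + σw2 * nsq f) + σw2) /
    (Complex.normSq h * Complex.normSq (phi x f) + σw2 * nsq f)

/-- The MVU channel-estimating filter `f_MVU = x / ‖x‖²`. -/
noncomputable def fMVU {B : ℕ} (x : Fin B → ℂ) : Fin B → ℂ :=
  fun i => x i / (nsq x : ℂ)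

section Filters

variable {B : ℕ}

theorem phi_smul (x f : Fin B → ℂ) (c : ℂ) :
    phi x (c • f) = (starRingEnd ℂ) c * phi x f := by
  simp only [phi, Pi.smul_apply, smul_eq_mul, map_mul, Finset.mul_sum, mul_assoc]

theorem phi_zero (x : Fin B → ℂ) : phi x 0 = 0 := by
  simp [phi]

theorem ne_zero_of_phi_ne_zero {x f : Fin B → ℂ} (hf : phi x f ≠ 0) : f ≠ 0 := by
  rintro rfl
  exact hf (phi_zero x)

theorem phi_self (x : Fin B → ℂ) : phi x x = nsq x := by
  simp only [phi, nsq, Complex.ofReal_sum, Complex.normSq_eq_conj_mul_self]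

theorem nsq_smul (f : Fin B → ℂ) (c : ℂ) : nsq (c • f) = Complex.normSq c * nsq f := by
  simp only [nsq, Pi.smul_apply, smul_eq_mul, Complex.normSq_mul, Finset.mul_sum]

theorem nsq_nonneg (f : Fin B → ℂ) : 0 ≤ nsq f :=
  Finset.sum_nonneg fun i _ => Complex.normSq_nonneg (f i)

theorem nsq_pos {f : Fin B → ℂ} (hf : f ≠ 0) : 0 < nsq f := by
  obtain ⟨i, hi⟩ := Function.ne_iff.mp hf
  exact Finset.sum_pos' (fun j _ => Complex.normSq_nonneg (f j))
    ⟨i, Finset.mem_univ i, Complex.normSq_pos.mpr hi⟩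

theorem fMVU_eq_smul (x : Fin B → ℂ) : fMVU x = ((nsq x : ℂ)⁻¹) • x := by
  funext i
  simp [fMVU, div_eq_inv_mul]

theorem phi_fMVU {x : Fin B → ℂ} (hx : x ≠ 0) : phi x (fMVU x) = 1 := by
  have hn : (nsq x : ℂ) ≠ 0 := Complex.ofReal_ne_zero.mpr (nsq_pos hx).ne'
  rw [fMVU_eq_smul, phi_smul, phi_self, map_inv₀, Complex.conj_ofReal, inv_mul_cancel₀ hn]

end Filters

noncomputable def mdcRay (σx2 σw2 a n c : ℝ) : ℝ :=
  (σx2 * (a * (c - 1) ^ 2 + σw2 * (c ^ 2 * n)) + σw2) / (c ^ 2 * (a + σw2 * n))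

theorem Mdc_ofReal_smul {B : ℕ} (σx2 σw2 : ℝ) (h : ℂ) {x f : Fin B → ℂ} (hf : phi x f = 1)
    (c : ℝ) :
    Mdc σx2 σw2 h x ((c : ℂ) • f) = mdcRay σx2 σw2 (Complex.normSq h) (nsq f) c := by
  have hc : Complex.normSq ((c : ℂ) - 1) = (c - 1) ^ 2 := by
    rw [← Complex.ofReal_one, ← Complex.ofReal_sub, Complex.normSq_ofReal, sq]
  simp only [Mdc, mdcRay, phi_smul, nsq_smul, hf, Complex.conj_ofReal, mul_one, hc,
    Complex.normSq_ofReal]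
  ring_nf

theorem Mdc_eq_mdcRay_one {B : ℕ} (σx2 σw2 : ℝ) (h : ℂ) {x f : Fin B → ℂ} (hf : phi x f = 1) :
    Mdc σx2 σw2 h x f = mdcRay σx2 σw2 (Complex.normSq h) (nsq f) 1 := by
  simpa using Mdc_ofReal_smul σx2 σw2 h hf 1

theorem mdcRay_lt_one {σx2 σw2 a n : ℝ} (hσx : 0 < σx2) (hσw : 0 < σw2) (ha : 0 < a)
    (hn : 0 ≤ n) :
    mdcRay σx2 σw2 a n (1 + σw2 / (a * σx2)) < mdcRay σx2 σw2 a n 1 := by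
  set c := 1 + σw2 / (a * σx2)
  have hc : 1 < c := lt_add_of_pos_right 1 (by positivity)
  -- `c - 1 = σw² / (a σx²)` turns the bias term into `σw² (c - 1)`.
  have hbias : σx2 * (a * (c - 1) ^ 2) = σw2 * (c - 1) := by
    simp only [c, add_sub_cancel_left]
    field_simp
  have hgain : σx2 * (a * (c - 1) ^ 2) + σw2 < σw2 * c ^ 2 := by
    rw [hbias]
    nlinarith [mul_lt_mul_of_pos_left hc (mul_pos hσw (by linarith : (0 : ℝ) < c))]
  have hden : 0 < a + σw2 * n := by positivity
  unfold mdcRay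
  rw [div_lt_div_iff₀ (by positivity) (by positivity)]
  nlinarith [mul_lt_mul_of_pos_right hgain hden]

theorem mvu_not_optimal_zeroth_order_dc_mse_general
    (B : ℕ) (x : Fin B → ℂ) (hx : x ≠ 0)
    (σx2 σw2 : ℝ) (hσx : 0 < σx2) (hσw : 0 < σw2)
    (h : ℂ) (hh : h ≠ 0) :
    ∃ f : Fin B → ℂ, f ≠ 0 ∧ Mdc σx2 σw2 h x f < Mdc σx2 σw2 h x (fMVU x) := by
  have ha : 0 < Complex.normSq h := Complex.normSq_pos.mpr hh
  set c := 1 + σw2 / (Complex.normSq h * σx2)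
  have hφ := phi_fMVU hx
  refine ⟨(c : ℂ) • fMVU x, ne_zero_of_phi_ne_zero (x := x) ?_, ?_⟩
  · rw [phi_smul, hφ, Complex.conj_ofReal, mul_one, Complex.ofReal_ne_zero]
    exact (add_pos one_pos (div_pos hσw (mul_pos ha hσx))).ne'
  · rw [Mdc_ofReal_smul σx2 σw2 h hφ, Mdc_eq_mdcRay_one σx2 σw2 h hφ]
    exact mdcRay_lt_one hσx hσw ha (nsq_nonneg _)

/-- Proposition 1: the MVU estimator is not an optimal channel estimator for
minimizing `[MSE_x^dc(ZF)]₀` when the channel is deterministic but unknown. -/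
theorem mvu_not_optimal_zeroth_order_dc_mse
    (B : ℕ) (hB : 1 ≤ B) (x : Fin B → ℂ) (hx : x ≠ 0)
    (σx2 σw2 : ℝ) (hσx : 0 < σx2) (hσw : 0 < σw2)
    (h : ℂ) (hh : h ≠ 0) :
    ∃ f : Fin B → ℂ, f ≠ 0 ∧ Mdc σx2 σw2 h x f < Mdc σx2 σw2 h x (fMVU x) :=
  mvu_not_optimal_zeroth_order_dc_mse_general B x hx σx2 σw2 hσx hσw h hh
end

section
/- Let (Ω, 𝓕, P) be a probability space, let λ > 0, and let X, Y : Ω → ℝ be integrable random variables with X ≥ 0 almost surely and Y ≥ λ² almost surely. Then X/Y is integrable and |E[X/Y] − E[X]/E[Y]| ≤ (1/λ⁴)·E[|X·E[Y] − Y·E[X]|]. -/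
open MeasureTheory

/-- The mean-of-ratio vs ratio-of-means bound: if `X ≥ 0` a.s., `Y ≥ λ²` a.s.
with `λ > 0`, and `X, Y` are integrable, then `X/Y` is integrable and
`|E[X/Y] − E[X]/E[Y]| ≤ (1/λ⁴)·E[|X·E[Y] − Y·E[X]|]`. -/
theorem mean_ratio_approx_bound
    {Ω : Type*} [MeasurableSpace Ω] (P : Measure Ω) [IsProbabilityMeasure P]
    (lam : ℝ) (hlam : 0 < lam) (X Y : Ω → ℝ)
    (hX : Integrable X P) (hY : Integrable Y P)
    (hX0 : ∀ᵐ ω ∂P, 0 ≤ X ω) (hY0 : ∀ᵐ ω ∂P, lam ^ 2 ≤ Y ω) :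
    Integrable (fun ω => X ω / Y ω) P ∧
      |(∫ ω, X ω / Y ω ∂P) - (∫ ω, X ω ∂P) / (∫ ω, Y ω ∂P)| ≤
        (1 / lam ^ 4) *
          ∫ ω, |X ω * (∫ ω', Y ω' ∂P) - Y ω * (∫ ω', X ω' ∂P)| ∂P := by
  have hl2 : (0:ℝ) < lam ^ 2 := by positivity
  set mX := ∫ ω, X ω ∂P with hmX
  set mY := ∫ ω, Y ω ∂P with hmY
  have hmYge : lam ^ 2 ≤ mY := by
    have := integral_mono_ae (integrable_const (lam ^ 2)) hY hY0
    simpa using this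
  have hmYpos : 0 < mY := lt_of_lt_of_le hl2 hmYge
  -- integrability of X/Y
  have hmeas : AEStronglyMeasurable (fun ω => X ω / Y ω) P := (hX.1.aemeasurable.div hY.1.aemeasurable).aestronglyMeasurable
  have hbound : ∀ᵐ ω ∂P, ‖X ω / Y ω‖ ≤ X ω / lam ^ 2 := by
    filter_upwards [hX0, hY0] with ω h0 h1
    have hYpos : 0 < Y ω := lt_of_lt_of_le hl2 h1
    have : 0 ≤ X ω / Y ω := div_nonneg h0 hYpos.le
    rw [Real.norm_eq_abs, abs_of_nonneg this]
    exact div_le_div_of_nonneg_left h0 hl2 h1 |>.trans_eq rfl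
  have hInt : Integrable (fun ω => X ω / Y ω) P :=
    (hX.div_const (lam ^ 2)).mono' hmeas hbound
  refine ⟨hInt, ?_⟩
  have hg : Integrable (fun ω => |X ω * mY - Y ω * mX|) P :=
    ((hX.mul_const mY).sub (hY.mul_const mX)).abs
  have hdiff : Integrable (fun ω => X ω / Y ω - mX / mY) P :=
    hInt.sub (integrable_const _)
  have hint_eq : (∫ ω, X ω / Y ω ∂P) - mX / mY
      = ∫ ω, (X ω / Y ω - mX / mY) ∂P := by
    rw [integral_sub hInt (integrable_const _), integral_const]
    simp
  rw [hint_eq]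
  calc |∫ ω, (X ω / Y ω - mX / mY) ∂P|
      ≤ ∫ ω, |X ω / Y ω - mX / mY| ∂P := by simpa [Real.norm_eq_abs] using norm_integral_le_integral_norm (fun ω => X ω / Y ω - mX / mY)
    _ ≤ ∫ ω, (1 / lam ^ 4) * |X ω * mY - Y ω * mX| ∂P := by
        apply integral_mono_ae hdiff.abs (hg.const_mul _)
        filter_upwards [hX0, hY0] with ω h0 h1
        have hYpos : 0 < Y ω := lt_of_lt_of_le hl2 h1
        have hident : X ω / Y ω - mX / mY = (X ω * mY - Y ω * mX) / (Y ω * mY) := by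
          field_simp
        rw [hident, abs_div, abs_of_pos (mul_pos hYpos hmYpos), div_eq_mul_inv,
          mul_comm, ← one_div]
        apply mul_le_mul_of_nonneg_right _ (abs_nonneg _)
        apply one_div_le_one_div_of_le (by positivity)
        have : lam ^ 4 = lam ^ 2 * lam ^ 2 := by ring
        rw [this]
        exact mul_le_mul h1 hmYge hl2.le hYpos.le
    _ = (1 / lam ^ 4) * ∫ ω, |X ω * mY - Y ω * mX| ∂P := integral_const_mul _ _
end

section
/- Let (Ω, 𝓕, P) be a probability space and λ > 0. Let (Xₙ) and (Yₙ) be sequences of square-integrable real random variables with Xₙ ≥ 0 almost surely and Yₙ ≥ λ² almost surely for all n. Suppose Var(Xₙ) → 0 and Var(Yₙ) → 0 as n → ∞, and that the sequences of means (E[Xₙ]) and (E[Yₙ]) are bounded. Then E[Xₙ/Yₙ] − E[Xₙ]/E[Yₙ] → 0 as n → ∞. (The zeroth-order approximation E[X/Y] ≈ E[X]/E[Y] is asymptotically exact as the variances vanish.) -/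
/-!
With `a = E[X]` and `b = E[Y]`, the identity `X/Y - a/b = (b (X - a) - a (Y - b)) / (Y b)` and
`Y, b ≥ c` bound `|E[X/Y] - a/b|` by `(|b| E|X - a| + |a| E|Y - b|) / c²`, and
`E|Z - E[Z]| ≤ √Var[Z]` because the variance of `|Z - E[Z]|` is nonnegative. With bounded means
and vanishing variances this bound tends to `0`.
-/

open MeasureTheory ProbabilityTheory Filter Topology

section

variable {Ω : Type*} [MeasurableSpace Ω] {μ : Measure Ω}

lemma integral_abs_sub_integral_le_sqrt_variance [IsProbabilityMeasure μ] {Z : Ω → ℝ}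
    (hZ : MemLp Z 2 μ) : ∫ ω, |Z ω - μ[Z]| ∂μ ≤ √(Var[Z; μ]) := by
  have hdev : MemLp (fun ω => |Z ω - μ[Z]|) 2 μ := (hZ.sub (memLp_const _)).abs
  have hvar := variance_nonneg (fun ω => |Z ω - μ[Z]|) μ
  rw [variance_eq_sub hdev] at hvar
  refine Real.le_sqrt_of_sq_le ?_
  rw [variance_eq_integral hZ.aemeasurable]
  simpa only [Pi.pow_apply, sq_abs, sub_nonneg] using hvar

lemma abs_div_sub_div_le {x y a b c : ℝ} (hc : 0 < c) (hy : c ≤ y) (hb : c ≤ b) :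
    |x / y - a / b| ≤ (|b| * |x - a| + |a| * |y - b|) / c ^ 2 := by
  have hy0 : 0 < y := hc.trans_le hy
  have hb0 : 0 < b := hc.trans_le hb
  have hyb : c ^ 2 ≤ y * b := by nlinarith
  rw [div_sub_div _ _ hy0.ne' hb0.ne', abs_div, abs_of_pos (mul_pos hy0 hb0)]
  calc |x * b - y * a| / (y * b)
      ≤ |x * b - y * a| / c ^ 2 := div_le_div_of_nonneg_left (abs_nonneg _) (by positivity) hyb
    _ = |b * (x - a) - a * (y - b)| / c ^ 2 := by congr 2; ring
    _ ≤ (|b| * |x - a| + |a| * |y - b|) / c ^ 2 := by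
        gcongr
        exact (abs_sub _ _).trans_eq (by rw [abs_mul, abs_mul])

lemma MeasureTheory.Integrable.div_of_le_ae {X Y : Ω → ℝ} {c : ℝ} (hX : Integrable X μ)
    (hY : AEStronglyMeasurable Y μ) (hc : 0 < c) (hYc : ∀ᵐ ω ∂μ, c ≤ Y ω) :
    Integrable (fun ω => X ω / Y ω) μ := by
  refine (hX.norm.div_const c).mono (hX.aestronglyMeasurable.div₀ hY) ?_
  filter_upwards [hYc] with ω hω
  simp only [Real.norm_eq_abs, abs_div, abs_abs, abs_of_pos hc]
  exact div_le_div_of_nonneg_left (abs_nonneg _) hc (hω.trans (le_abs_self _))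

lemma abs_integral_div_sub_div_integral_le [IsProbabilityMeasure μ] {X Y : Ω → ℝ} {c : ℝ}
    (hX : MemLp X 2 μ) (hY : MemLp Y 2 μ) (hc : 0 < c) (hYc : ∀ᵐ ω ∂μ, c ≤ Y ω) :
    |∫ ω, X ω / Y ω ∂μ - μ[X] / μ[Y]| ≤
      (|μ[Y]| * √(Var[X; μ]) + |μ[X]| * √(Var[Y; μ])) / c ^ 2 := by
  have hXi := hX.integrable one_le_two
  have hYi := hY.integrable one_le_two
  have hc_le_mean : c ≤ μ[Y] := by
    simpa using integral_mono_ae (integrable_const c) hYi hYc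
  have hdevX : Integrable (fun ω => |X ω - μ[X]|) μ := (hXi.sub (integrable_const _)).abs
  have hdevY : Integrable (fun ω => |Y ω - μ[Y]|) μ := (hYi.sub (integrable_const _)).abs
  calc |∫ ω, X ω / Y ω ∂μ - μ[X] / μ[Y]|
      = |∫ ω, (X ω / Y ω - μ[X] / μ[Y]) ∂μ| := by
        rw [integral_sub (hXi.div_of_le_ae hY.1 hc hYc) (integrable_const _), integral_const,
          probReal_univ, one_smul]
    _ ≤ ∫ ω, |X ω / Y ω - μ[X] / μ[Y]| ∂μ := abs_integral_le_integral_abs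
    _ ≤ ∫ ω, (|μ[Y]| * |X ω - μ[X]| + |μ[X]| * |Y ω - μ[Y]|) / c ^ 2 ∂μ := by
        refine integral_mono_ae ((hXi.div_of_le_ae hY.1 hc hYc).sub (integrable_const _)).abs
          ((hdevX.const_mul _).add (hdevY.const_mul _) |>.div_const _) ?_
        filter_upwards [hYc] with ω hω
        exact abs_div_sub_div_le hc hω hc_le_mean
    _ = (|μ[Y]| * ∫ ω, |X ω - μ[X]| ∂μ + |μ[X]| * ∫ ω, |Y ω - μ[Y]| ∂μ) / c ^ 2 := by
        rw [integral_div, integral_add (hdevX.const_mul _) (hdevY.const_mul _), integral_const_mul,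
          integral_const_mul]
    _ ≤ (|μ[Y]| * √(Var[X; μ]) + |μ[X]| * √(Var[Y; μ])) / c ^ 2 := by
        gcongr
        · exact integral_abs_sub_integral_le_sqrt_variance hX
        · exact integral_abs_sub_integral_le_sqrt_variance hY

end

theorem mean_ratio_approx_asymptotically_exact_general
    {Ω : Type*} [MeasurableSpace Ω] (P : Measure Ω) [IsProbabilityMeasure P]
    (lam : ℝ) (hlam : 0 < lam) (X Y : ℕ → Ω → ℝ)
    (hX2 : ∀ n, MemLp (X n) 2 P) (hY2 : ∀ n, MemLp (Y n) 2 P)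
    (hY0 : ∀ n, ∀ᵐ ω ∂P, lam ^ 2 ≤ Y n ω)
    (hVarX : Filter.Tendsto (fun n => ProbabilityTheory.variance (X n) P)
      Filter.atTop (nhds 0))
    (hVarY : Filter.Tendsto (fun n => ProbabilityTheory.variance (Y n) P)
      Filter.atTop (nhds 0))
    (hEX : ∃ C : ℝ, ∀ n, |∫ ω, X n ω ∂P| ≤ C)
    (hEY : ∃ C : ℝ, ∀ n, |∫ ω, Y n ω ∂P| ≤ C) :
    Filter.Tendsto
      (fun n => (∫ ω, X n ω / Y n ω ∂P) - (∫ ω, X n ω ∂P) / (∫ ω, Y n ω ∂P))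
      Filter.atTop (nhds 0) := by
  obtain ⟨CX, hCX⟩ := hEX
  obtain ⟨CY, hCY⟩ := hEY
  have hsqrt : Tendsto Real.sqrt (𝓝 0) (𝓝 0) := by
    simpa using Real.continuous_sqrt.tendsto 0
  have hbound_lim : Tendsto (fun n => (CY * √(Var[X n; P]) + CX * √(Var[Y n; P])) / (lam ^ 2) ^ 2)
      atTop (𝓝 0) := by
    simpa using (((hsqrt.comp hVarX).const_mul CY).add ((hsqrt.comp hVarY).const_mul CX)).div_const
      ((lam ^ 2) ^ 2)
  refine squeeze_zero_norm (fun n => ?_) hbound_lim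
  refine (abs_integral_div_sub_div_integral_le (hX2 n) (hY2 n) (by positivity) (hY0 n)).trans ?_
  gcongr
  exacts [hCY n, hCX n]

/-- The zeroth-order approximation `E[X/Y] ≈ E[X]/E[Y]` is asymptotically exact
as the variances vanish: if `Xₙ ≥ 0` a.s., `Yₙ ≥ λ²` a.s. with `λ > 0`, the
`Xₙ, Yₙ` are square-integrable with variances tending to `0` and bounded means,
then `E[Xₙ/Yₙ] − E[Xₙ]/E[Yₙ] → 0`. -/
theorem mean_ratio_approx_asymptotically_exact
    {Ω : Type*} [MeasurableSpace Ω] (P : Measure Ω) [IsProbabilityMeasure P]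
    (lam : ℝ) (hlam : 0 < lam) (X Y : ℕ → Ω → ℝ)
    (hX2 : ∀ n, MemLp (X n) 2 P) (hY2 : ∀ n, MemLp (Y n) 2 P)
    (hX0 : ∀ n, ∀ᵐ ω ∂P, 0 ≤ X n ω) (hY0 : ∀ n, ∀ᵐ ω ∂P, lam ^ 2 ≤ Y n ω)
    (hVarX : Filter.Tendsto (fun n => ProbabilityTheory.variance (X n) P)
      Filter.atTop (nhds 0))
    (hVarY : Filter.Tendsto (fun n => ProbabilityTheory.variance (Y n) P)
      Filter.atTop (nhds 0))
    (hEX : ∃ C : ℝ, ∀ n, |∫ ω, X n ω ∂P| ≤ C)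
    (hEY : ∃ C : ℝ, ∀ n, |∫ ω, Y n ω ∂P| ≤ C) :
    Filter.Tendsto
      (fun n => (∫ ω, X n ω / Y n ω ∂P) - (∫ ω, X n ω ∂P) / (∫ ω, Y n ω ∂P))
      Filter.atTop (nhds 0) :=
  mean_ratio_approx_asymptotically_exact_general P lam hlam X Y hX2 hY2 hY0 hVarX hVarY hEX hEY
end
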